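/- Let M > 0, a > 3√3·M, H ∈ ℝ with H ≠ 0, and s ∈ ℝ. Let r₁ < r₂ be the two positive roots of r ↦ κ(r) := 1 − 2M/r − r²/a², and define σ : (r₁, r₂) → ℝ by σ(r) = s·κ(r)^(1/2) + (H/a²)·κ(r)^(1/2)·∫_{3M}^r x·κ(x)^(−3/2) dx. Then there exists exactly one r₀ ∈ (r₁, r₂) with σ(r₀) = 0. -/

import Mathlib

/-!
By Vieta, `κ r = (r - r₁) (r₂ - r) (r + r₁ + r₂) / (a² r)`, and `3M` lies between the roots.
On `(r₁, r₂)` we have `σ = (H / a²) √κ (F + s a² / H)` with `F r = ∫_{3M}^r x κ(x)^(-3/2) dx`.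
The integrand is positive, so `F` is strictly increasing; as `κ` vanishes only to first order at
the roots, the integrand dominates a multiple of `|x - rᵢ|^(-3/2)`, so `F` runs from `-∞` to `+∞`.
Hence `F` takes the value `-s a² / H` exactly once.
-/

open MeasureTheory Filter Topology Set

lemma tendsto_const_sub_nhdsLT (u : ℝ) : Tendsto (fun v => u - v) (𝓝[<] u) (𝓝[>] 0) := by
  refine tendsto_nhdsWithin_of_tendsto_nhds_of_eventually_within _ ?_ ?_
  · exact ((continuous_sub_left u).tendsto' u 0 (sub_self u)).mono_left nhdsWithin_le_nhds
  · filter_upwards [self_mem_nhdsWithin] with v (hv : v < u) using sub_pos.2 hv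

lemma tendsto_integral_rpow_nhdsGT_zero {p b : ℝ} (hp : p < -1) (hb : 0 < b) :
    Tendsto (fun ε => ∫ y in ε..b, y ^ p) (𝓝[>] 0) atTop := by
  have hlim : Tendsto (fun ε : ℝ => (ε ^ (p + 1) - b ^ (p + 1)) / -(p + 1)) (𝓝[>] 0) atTop :=
    (tendsto_atTop_add_const_right _ _ (tendsto_rpow_neg_nhdsGT_zero (by linarith))).atTop_div_const
      (by linarith)
  refine hlim.congr' ?_
  filter_upwards [Ioo_mem_nhdsGT hb] with ε hε
  have h0 : (0 : ℝ) ∉ uIcc ε b := by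
    rw [uIcc_of_le hε.2.le]
    exact fun h => hε.1.not_ge h.1
  rw [integral_rpow (Or.inr ⟨by linarith, h0⟩), div_neg, ← neg_div, neg_sub]

lemma tendsto_integral_nhdsLT_atTop_of_rpow_le {g : ℝ → ℝ} {c u D p : ℝ} (hcu : c < u)
    (hD : 0 < D) (hp : p < -1) (hg : ContinuousOn g (Ico c u))
    (hle : ∀ x ∈ Ico c u, D * (u - x) ^ p ≤ g x) :
    Tendsto (fun v => ∫ x in c..v, g x) (𝓝[<] u) atTop := by
  have hlim : Tendsto (fun v => D * ∫ y in (u - v)..(u - c), y ^ p) (𝓝[<] u) atTop :=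
    ((tendsto_integral_rpow_nhdsGT_zero hp (sub_pos.2 hcu)).comp
      (tendsto_const_sub_nhdsLT u)).const_mul_atTop hD
  refine tendsto_atTop_mono' _ ?_ hlim
  filter_upwards [Ioo_mem_nhdsLT hcu] with v hv
  have hsub : Icc c v ⊆ Ico c u := Icc_subset_Ico_right hv.2
  rw [← intervalIntegral.integral_comp_sub_left (fun y => y ^ p),
    ← intervalIntegral.integral_const_mul]
  refine intervalIntegral.integral_mono_on hv.1.le ?_ ((hg.mono hsub).intervalIntegrable_of_Icc
    hv.1.le) fun x hx => hle x (hsub hx)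
  refine ContinuousOn.intervalIntegrable_of_Icc hv.1.le (continuousOn_const.mul ?_)
  exact (continuousOn_const.sub continuousOn_id).rpow_const fun x hx =>
    Or.inl (sub_pos.2 (hx.2.trans_lt hv.2)).ne'

lemma tendsto_integral_nhdsGT_atBot_of_rpow_le {g : ℝ → ℝ} {l c D p : ℝ} (hlc : l < c)
    (hD : 0 < D) (hp : p < -1) (hg : ContinuousOn g (Ioc l c))
    (hle : ∀ x ∈ Ioc l c, D * (x - l) ^ p ≤ g x) :
    Tendsto (fun v => ∫ x in c..v, g x) (𝓝[>] l) atBot := by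
  have hreflect : Tendsto (fun w => ∫ x in -c..w, g (-x)) (𝓝[<] (-l)) atTop := by
    refine tendsto_integral_nhdsLT_atTop_of_rpow_le (neg_lt_neg hlc) hD hp
      (hg.comp continuousOn_neg fun x hx => ⟨lt_neg.1 hx.2, neg_le.1 hx.1⟩) fun x hx => ?_
    simpa only [neg_sub_comm] using hle (-x) ⟨lt_neg.1 hx.2, neg_le.1 hx.1⟩
  rw [← tendsto_neg_atTop_iff]
  refine (hreflect.comp tendsto_neg_nhdsGT).congr fun v => ?_
  simp only [Function.comp, intervalIntegral.integral_comp_neg, neg_neg,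
    intervalIntegral.integral_symm c v]

lemma StrictMonoOn.existsUnique_eq_of_tendsto {F : ℝ → ℝ} {l u : ℝ} (hlu : l < u)
    (hmono : StrictMonoOn F (Ioo l u)) (hcont : ContinuousOn F (Ioo l u))
    (hl : Tendsto F (𝓝[>] l) atBot) (hu : Tendsto F (𝓝[<] u) atTop) (t : ℝ) :
    ∃! r, r ∈ Ioo l u ∧ F r = t := by
  obtain ⟨r, hr, hFr⟩ := hcont.surjOn_of_tendsto (nonempty_Ioo.2 hlu)
    ((tendsto_comp_coe_Ioo_atBot hlu).2 hl) ((tendsto_comp_coe_Ioo_atTop hlu).2 hu) (mem_univ t)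
  exact ⟨r, ⟨hr, hFr⟩, fun r' ⟨hr', hFr'⟩ => hmono.injOn hr' hr (hFr'.trans hFr.symm)⟩

lemma hasDerivAt_integral_of_continuousOn_Ioo {g : ℝ → ℝ} {l u c r : ℝ}
    (hg : ContinuousOn g (Ioo l u)) (hc : c ∈ Ioo l u) (hr : r ∈ Ioo l u) :
    HasDerivAt (fun v => ∫ x in c..v, g x) (g r) r :=
  intervalIntegral.integral_hasDerivAt_right
    ((hg.mono (ordConnected_Ioo.uIcc_subset hc hr)).intervalIntegrable)
    (hg.stronglyMeasurableAtFilter isOpen_Ioo r hr) (hg.continuousAt (isOpen_Ioo.mem_nhds hr))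

theorem existsUnique_integral_eq_of_tendsto {g : ℝ → ℝ} {l u c : ℝ} (hc : c ∈ Ioo l u)
    (hg : ContinuousOn g (Ioo l u)) (hpos : ∀ x ∈ Ioo l u, 0 < g x)
    (hl : Tendsto (fun v => ∫ x in c..v, g x) (𝓝[>] l) atBot)
    (hu : Tendsto (fun v => ∫ x in c..v, g x) (𝓝[<] u) atTop) (t : ℝ) :
    ∃! r, r ∈ Ioo l u ∧ ∫ x in c..r, g x = t := by
  have hderiv := fun r (hr : r ∈ Ioo l u) => hasDerivAt_integral_of_continuousOn_Ioo hg hc hr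
  have hcont : ContinuousOn (fun v => ∫ x in c..v, g x) (Ioo l u) :=
    fun r hr => (hderiv r hr).continuousAt.continuousWithinAt
  have hmono : StrictMonoOn (fun v => ∫ x in c..v, g x) (Ioo l u) :=
    strictMonoOn_of_hasDerivWithinAt_pos (convex_Ioo l u) hcont
      (fun r hr => (hderiv r (interior_subset hr)).hasDerivWithinAt)
      (fun r hr => hpos r (interior_subset hr))
  exact hmono.existsUnique_eq_of_tendsto (hc.1.trans hc.2) hcont hl hu t

lemma mul_rpow_le_mul_rpow_of_le_mul {m x k C d p : ℝ} (hm : 0 ≤ m) (hmx : m ≤ x) (hk : 0 < k)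
    (hC : 0 ≤ C) (hd : 0 ≤ d) (hkCd : k ≤ C * d) (hp : p ≤ 0) :
    m * C ^ p * d ^ p ≤ x * k ^ p := by
  rw [mul_assoc, ← Real.mul_rpow hC hd]
  exact mul_le_mul hmx (Real.rpow_le_rpow_of_nonpos hk hkCd hp) (by positivity) (hm.trans hmx)

lemma mul_add_mul_mul_eq_zero_iff {s k c F : ℝ} (hk : k ≠ 0) (hc : c ≠ 0) :
    s * k + c * k * F = 0 ↔ F = -(s / c) := by
  have hfactor : s * k + c * k * F = c * k * (F + s / c) := by field_simp; ring
  rw [hfactor, mul_eq_zero, or_iff_right (mul_ne_zero hc hk), add_eq_zero_iff_eq_neg]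

namespace McVittie

noncomputable def kappa (M a r : ℝ) : ℝ := 1 - 2 * M / r - r ^ 2 / a ^ 2

lemma ne_zero_of_kappa_eq_zero {M a r₁ r₂ : ℝ} (h₁₂ : r₁ ≠ r₂) (h₁ : kappa M a r₁ = 0)
    (h₂ : kappa M a r₂ = 0) : a ≠ 0 := by
  rintro rfl
  have hroot : ∀ r, kappa M 0 r = 0 → r = 2 * M := fun r hr => by
    have h : 1 - 2 * M / r = 0 := by simpa [kappa] using hr
    rcases eq_or_ne r 0 with rfl | hr0
    · simp at h
    · field_simp at h
      linarith
  exact h₁₂ ((hroot r₁ h₁).trans (hroot r₂ h₂).symm)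

lemma kappa_roots_vieta {M a r₁ r₂ : ℝ} (hr₁ : r₁ ≠ 0) (hr₂ : r₂ ≠ 0) (h₁₂ : r₁ ≠ r₂)
    (h₁ : kappa M a r₁ = 0) (h₂ : kappa M a r₂ = 0) :
    a ^ 2 = r₁ ^ 2 + r₁ * r₂ + r₂ ^ 2 ∧ 2 * M * a ^ 2 = r₁ * r₂ * (r₁ + r₂) := by
  have ha := ne_zero_of_kappa_eq_zero h₁₂ h₁ h₂
  have hcubic : ∀ r, r ≠ 0 → kappa M a r = 0 → r * a ^ 2 - 2 * M * a ^ 2 - r ^ 3 = 0 :=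
    fun r hr h => by
      simp only [kappa] at h
      field_simp at h
      linear_combination h
  have hc₁ := hcubic r₁ hr₁ h₁
  have hc₂ := hcubic r₂ hr₂ h₂
  have hsum : a ^ 2 = r₁ ^ 2 + r₁ * r₂ + r₂ ^ 2 := by
    have : (r₁ - r₂) * (a ^ 2 - (r₁ ^ 2 + r₁ * r₂ + r₂ ^ 2)) = 0 := by
      linear_combination hc₁ - hc₂
    linarith [(mul_eq_zero.1 this).resolve_left (sub_ne_zero.2 h₁₂)]
  exact ⟨hsum, by linear_combination r₁ * hsum - hc₁⟩

variable {M a r₁ r₂ : ℝ}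

lemma kappa_eq_mul (ha : a ^ 2 = r₁ ^ 2 + r₁ * r₂ + r₂ ^ 2)
    (hM : 2 * M * a ^ 2 = r₁ * r₂ * (r₁ + r₂)) (ha0 : a ≠ 0) {r : ℝ} (hr : r ≠ 0) :
    kappa M a r = (r - r₁) * (r₂ - r) * ((r + r₁ + r₂) / (a ^ 2 * r)) := by
  rw [kappa, mul_div_assoc', eq_div_iff (by positivity)]
  field_simp
  linear_combination r * ha - hM

lemma three_mul_mem_Ioo (hr₁ : 0 < r₁) (h₁₂ : r₁ < r₂) (ha : a ^ 2 = r₁ ^ 2 + r₁ * r₂ + r₂ ^ 2)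
    (hM : 2 * M * a ^ 2 = r₁ * r₂ * (r₁ + r₂)) (ha0 : a ≠ 0) : 3 * M ∈ Ioo r₁ r₂ := by
  have hr₂ : 0 < r₂ := hr₁.trans h₁₂
  have hleft : 2 * a ^ 2 * (3 * M - r₁) = r₁ * (r₂ - r₁) * (2 * r₁ + r₂) := by
    linear_combination 3 * hM - 2 * r₁ * ha
  have hright : 2 * a ^ 2 * (r₂ - 3 * M) = r₂ * (r₂ - r₁) * (r₁ + 2 * r₂) := by
    linear_combination 2 * r₂ * ha - 3 * hM
  have hd : 0 < r₂ - r₁ := sub_pos.2 h₁₂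
  constructor
  · have : 0 < 2 * a ^ 2 * (3 * M - r₁) := by rw [hleft]; positivity
    linarith [pos_of_mul_pos_right this (by positivity)]
  · have : 0 < 2 * a ^ 2 * (r₂ - 3 * M) := by rw [hright]; positivity
    linarith [pos_of_mul_pos_right this (by positivity)]

lemma kappa_pos (hr₁ : 0 < r₁) (ha : a ^ 2 = r₁ ^ 2 + r₁ * r₂ + r₂ ^ 2)
    (hM : 2 * M * a ^ 2 = r₁ * r₂ * (r₁ + r₂)) (ha0 : a ≠ 0) {r : ℝ} (hr : r ∈ Ioo r₁ r₂) :
    0 < kappa M a r := by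
  have hr0 : 0 < r := hr₁.trans hr.1
  have : 0 < r₂ := hr0.trans hr.2
  rw [kappa_eq_mul ha hM ha0 hr0.ne']
  have := sub_pos.2 hr.1
  have := sub_pos.2 hr.2
  positivity

lemma kappa_le (hr₁ : 0 < r₁) (ha : a ^ 2 = r₁ ^ 2 + r₁ * r₂ + r₂ ^ 2)
    (hM : 2 * M * a ^ 2 = r₁ * r₂ * (r₁ + r₂)) (ha0 : a ≠ 0) {r : ℝ} (hr : r ∈ Ioo r₁ r₂) :
    kappa M a r ≤ (r - r₁) * (r₂ - r) * ((2 * r₁ + r₂) / (a ^ 2 * r₁)) := by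
  have hr0 : 0 < r := hr₁.trans hr.1
  rw [kappa_eq_mul ha hM ha0 hr0.ne']
  have := sub_pos.2 hr.1
  have := sub_pos.2 hr.2
  have : 0 < r₂ := hr0.trans hr.2
  refine mul_le_mul_of_nonneg_left ?_ (by positivity)
  rw [div_le_div_iff₀ (by positivity) (by positivity), ← sub_nonneg]
  have hdiff : (2 * r₁ + r₂) * (a ^ 2 * r) - (r + r₁ + r₂) * (a ^ 2 * r₁) =
      a ^ 2 * ((r - r₁) * (r₁ + r₂)) := by ring
  rw [hdiff]
  positivity

lemma kappa_le_mul_sub_right (hr₁ : 0 < r₁) (ha : a ^ 2 = r₁ ^ 2 + r₁ * r₂ + r₂ ^ 2)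
    (hM : 2 * M * a ^ 2 = r₁ * r₂ * (r₁ + r₂)) (ha0 : a ≠ 0) {r : ℝ} (hr : r ∈ Ioo r₁ r₂) :
    kappa M a r ≤ (r₂ - r₁) * ((2 * r₁ + r₂) / (a ^ 2 * r₁)) * (r₂ - r) := by
  have : 0 < r₂ := hr₁.trans (hr.1.trans hr.2)
  have : (r - r₁) * (r₂ - r) ≤ (r₂ - r₁) * (r₂ - r) := by
    gcongr
    · linarith [hr.2]
    · exact hr.2.le
  calc kappa M a r ≤ (r - r₁) * (r₂ - r) * ((2 * r₁ + r₂) / (a ^ 2 * r₁)) :=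
        kappa_le hr₁ ha hM ha0 hr
    _ ≤ (r₂ - r₁) * (r₂ - r) * ((2 * r₁ + r₂) / (a ^ 2 * r₁)) := by gcongr
    _ = _ := by ring

lemma kappa_le_mul_sub_left (hr₁ : 0 < r₁) (ha : a ^ 2 = r₁ ^ 2 + r₁ * r₂ + r₂ ^ 2)
    (hM : 2 * M * a ^ 2 = r₁ * r₂ * (r₁ + r₂)) (ha0 : a ≠ 0) {r : ℝ} (hr : r ∈ Ioo r₁ r₂) :
    kappa M a r ≤ (r₂ - r₁) * ((2 * r₁ + r₂) / (a ^ 2 * r₁)) * (r - r₁) := by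
  have : 0 < r₂ := hr₁.trans (hr.1.trans hr.2)
  have : (r - r₁) * (r₂ - r) ≤ (r - r₁) * (r₂ - r₁) := by
    gcongr
    · linarith [hr.1]
    · exact hr.1.le
  calc kappa M a r ≤ (r - r₁) * (r₂ - r) * ((2 * r₁ + r₂) / (a ^ 2 * r₁)) :=
        kappa_le hr₁ ha hM ha0 hr
    _ ≤ (r - r₁) * (r₂ - r₁) * ((2 * r₁ + r₂) / (a ^ 2 * r₁)) := by gcongr
    _ = _ := by ring

lemma continuousOn_integrand (hr₁ : 0 < r₁) (ha : a ^ 2 = r₁ ^ 2 + r₁ * r₂ + r₂ ^ 2)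
    (hM : 2 * M * a ^ 2 = r₁ * r₂ * (r₁ + r₂)) (ha0 : a ≠ 0) :
    ContinuousOn (fun x => x * kappa M a x ^ (-(3 : ℝ) / 2)) (Ioo r₁ r₂) := by
  have hkappa : ContinuousOn (kappa M a) (Ioo r₁ r₂) := by
    have hx0 : ∀ x ∈ Ioo r₁ r₂, x ≠ 0 := fun x hx => (hr₁.trans hx.1).ne'
    unfold kappa
    fun_prop (disch := first | assumption | positivity)
  exact continuousOn_id.mul (hkappa.rpow_const fun x hx => Or.inl (kappa_pos hr₁ ha hM ha0 hx).ne')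

lemma tendsto_integral_nhdsLT (hr₁ : 0 < r₁) (h₁₂ : r₁ < r₂)
    (ha : a ^ 2 = r₁ ^ 2 + r₁ * r₂ + r₂ ^ 2) (hM : 2 * M * a ^ 2 = r₁ * r₂ * (r₁ + r₂))
    (ha0 : a ≠ 0) :
    Tendsto (fun v => ∫ x in (3 * M)..v, x * kappa M a x ^ (-(3 : ℝ) / 2)) (𝓝[<] r₂) atTop := by
  have h3M := three_mul_mem_Ioo hr₁ h₁₂ ha hM ha0
  have hsub : Ico (3 * M) r₂ ⊆ Ioo r₁ r₂ := Ico_subset_Ioo_left h3M.1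
  have := sub_pos.2 h₁₂
  have : 0 < r₂ := hr₁.trans h₁₂
  refine tendsto_integral_nhdsLT_atTop_of_rpow_le h3M.2
      (D := r₁ * ((r₂ - r₁) * ((2 * r₁ + r₂) / (a ^ 2 * r₁))) ^ (-(3 : ℝ) / 2)) (p := -(3 : ℝ) / 2)
      (by positivity) (by norm_num)
    ((continuousOn_integrand hr₁ ha hM ha0).mono hsub) fun x hx => ?_
  exact mul_rpow_le_mul_rpow_of_le_mul hr₁.le (hsub hx).1.le (kappa_pos hr₁ ha hM ha0 (hsub hx))
    (by positivity) (sub_nonneg.2 hx.2.le) (kappa_le_mul_sub_right hr₁ ha hM ha0 (hsub hx))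
    (by norm_num)

lemma tendsto_integral_nhdsGT (hr₁ : 0 < r₁) (h₁₂ : r₁ < r₂)
    (ha : a ^ 2 = r₁ ^ 2 + r₁ * r₂ + r₂ ^ 2) (hM : 2 * M * a ^ 2 = r₁ * r₂ * (r₁ + r₂))
    (ha0 : a ≠ 0) :
    Tendsto (fun v => ∫ x in (3 * M)..v, x * kappa M a x ^ (-(3 : ℝ) / 2)) (𝓝[>] r₁) atBot := by
  have h3M := three_mul_mem_Ioo hr₁ h₁₂ ha hM ha0
  have hsub : Ioc r₁ (3 * M) ⊆ Ioo r₁ r₂ := Ioc_subset_Ioo_right h3M.2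
  have := sub_pos.2 h₁₂
  have : 0 < r₂ := hr₁.trans h₁₂
  refine tendsto_integral_nhdsGT_atBot_of_rpow_le h3M.1
      (D := r₁ * ((r₂ - r₁) * ((2 * r₁ + r₂) / (a ^ 2 * r₁))) ^ (-(3 : ℝ) / 2)) (p := -(3 : ℝ) / 2)
      (by positivity) (by norm_num)
    ((continuousOn_integrand hr₁ ha hM ha0).mono hsub) fun x hx => ?_
  exact mul_rpow_le_mul_rpow_of_le_mul hr₁.le hx.1.le (kappa_pos hr₁ ha hM ha0 (hsub hx))
    (by positivity) (sub_nonneg.2 hx.1.le) (kappa_le_mul_sub_left hr₁ ha hM ha0 (hsub hx))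
    (by norm_num)

end McVittie

theorem mcvittie_closed_sigma_unique_zero_general (M a H s r₁ r₂ : ℝ) (hH : H ≠ 0)
    (hr₁pos : 0 < r₁) (hlt : r₁ < r₂)
    (hroot₁ : 1 - 2 * M / r₁ - r₁ ^ 2 / a ^ 2 = 0)
    (hroot₂ : 1 - 2 * M / r₂ - r₂ ^ 2 / a ^ 2 = 0)
    (σ : ℝ → ℝ)
    (hσ : ∀ r ∈ Set.Ioo r₁ r₂,
      σ r = s * (1 - 2 * M / r - r ^ 2 / a ^ 2) ^ ((1 : ℝ) / 2) +
        (H / a ^ 2) * (1 - 2 * M / r - r ^ 2 / a ^ 2) ^ ((1 : ℝ) / 2) *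
          ∫ x in (3 * M)..r, x * (1 - 2 * M / x - x ^ 2 / a ^ 2) ^ (-(3 : ℝ) / 2)) :
    ∃! r₀ : ℝ, r₀ ∈ Set.Ioo r₁ r₂ ∧ σ r₀ = 0 := by
  have ha0 : a ≠ 0 := McVittie.ne_zero_of_kappa_eq_zero hlt.ne hroot₁ hroot₂
  obtain ⟨ha, hM⟩ :=
    McVittie.kappa_roots_vieta hr₁pos.ne' (hr₁pos.trans hlt).ne' hlt.ne hroot₁ hroot₂
  have hκ : ∀ r ∈ Ioo r₁ r₂, 0 < McVittie.kappa M a r :=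
    fun r hr => McVittie.kappa_pos hr₁pos ha hM ha0 hr
  have hF := existsUnique_integral_eq_of_tendsto (McVittie.three_mul_mem_Ioo hr₁pos hlt ha hM ha0)
    (McVittie.continuousOn_integrand hr₁pos ha hM ha0)
    (fun x hx => mul_pos (hr₁pos.trans hx.1) (Real.rpow_pos_of_pos (hκ x hx) _))
    (McVittie.tendsto_integral_nhdsGT hr₁pos hlt ha hM ha0)
    (McVittie.tendsto_integral_nhdsLT hr₁pos hlt ha hM ha0) (-(s / (H / a ^ 2)))
  refine (existsUnique_congr fun r => and_congr_right fun hr => ?_).2 hF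
  rw [hσ r hr]
  exact mul_add_mul_mul_eq_zero_iff (Real.rpow_pos_of_pos (hκ r hr) _).ne'
    (div_ne_zero hH (pow_ne_zero 2 ha0))

/-- The metric coefficient `σ` of the closed (K = +1) McVittie spacetime
at an instant with Hubble value `H ≠ 0` has exactly one zero `r₀` in the allowed interval
`(r₁, r₂)`. -/
theorem mcvittie_closed_sigma_unique_zero (M a H s r₁ r₂ : ℝ) (hM : 0 < M)
    (ha : 3 * Real.sqrt 3 * M < a) (hH : H ≠ 0)
    (hr₁pos : 0 < r₁) (hlt : r₁ < r₂)
    (hroot₁ : 1 - 2 * M / r₁ - r₁ ^ 2 / a ^ 2 = 0)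
    (hroot₂ : 1 - 2 * M / r₂ - r₂ ^ 2 / a ^ 2 = 0)
    (σ : ℝ → ℝ)
    (hσ : ∀ r ∈ Set.Ioo r₁ r₂,
      σ r = s * (1 - 2 * M / r - r ^ 2 / a ^ 2) ^ ((1 : ℝ) / 2) +
        (H / a ^ 2) * (1 - 2 * M / r - r ^ 2 / a ^ 2) ^ ((1 : ℝ) / 2) *
          ∫ x in (3 * M)..r, x * (1 - 2 * M / x - x ^ 2 / a ^ 2) ^ (-(3 : ℝ) / 2)) :
    ∃! r₀ : ℝ, r₀ ∈ Set.Ioo r₁ r₂ ∧ σ r₀ = 0 :=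
  mcvittie_closed_sigma_unique_zero_general M a H s r₁ r₂ hH hr₁pos hlt hroot₁ hroot₂ σ hσ
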